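/- In a graph inverse semigroup G(E), two nonzero elements ab⁻¹ and cd⁻¹ are D-equivalent (Green's relation) if and only if r(a) = r(c). Consequently, each nonzero D-class of G(E) contains exactly one vertex of E. -/

import Mathlib

/-- A directed graph: vertices, edges, source and range maps. -/
structure DGraph where
  V : Type
  E : Type
  s : E → V
  r : E → V

namespace DGraph

variable {Q : DGraph}

/-- `pOk Q a l` : the list of edges `l` forms a valid path starting at vertex `a`. -/
def pOk (Q : DGraph) : Q.V → List Q.E → Prop
  | _, [] => True
  | a, e :: l => Q.s e = a ∧ pOk Q (Q.r e) l

/-- The end vertex of an edge-list starting at `a`. -/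
def pRng (Q : DGraph) (a : Q.V) (l : List Q.E) : Q.V :=
  l.foldl (fun _ e => Q.r e) a

theorem pRng_append (a : Q.V) (l₁ l₂ : List Q.E) :
    pRng Q a (l₁ ++ l₂) = pRng Q (pRng Q a l₁) l₂ :=
  List.foldl_append

theorem pOk_append {a : Q.V} {l₁ l₂ : List Q.E} (h₁ : pOk Q a l₁)
    (h₂ : pOk Q (pRng Q a l₁) l₂) : pOk Q a (l₁ ++ l₂) := by
  induction l₁ generalizing a with
  | nil => simpa [pRng] using h₂
  | cons e l ih =>
      obtain ⟨he, hl⟩ := h₁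
      exact ⟨he, ih hl h₂⟩

theorem pOk_drop {a : Q.V} {l₁ l₂ : List Q.E} (h : pOk Q a (l₁ ++ l₂)) :
    pOk Q (pRng Q a l₁) l₂ := by
  induction l₁ generalizing a with
  | nil => simpa [pRng] using h
  | cons e l ih => exact ih h.2

/-- A (finite, directed) path in the graph `Q`: a start vertex together with a
compatible list of edges.  Paths of length `0` are vertices. -/
structure GPath (Q : DGraph) where
  start : Q.V
  edges : List Q.E
  ok : pOk Q start edges

/-- The source `s(p)` of a path. -/
def GPath.src (p : GPath Q) : Q.V := p.start

/-- The range `r(p)` of a path. -/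
def GPath.rng (p : GPath Q) : Q.V := pRng Q p.start p.edges

/-- The length `|p|` of a path. -/
def GPath.length (p : GPath Q) : ℕ := p.edges.length

/-- The trivial (length zero) path at a vertex `a`. -/
def GPath.triv (Q : DGraph) (a : Q.V) : GPath Q := ⟨a, [], trivial⟩

/-- Concatenation of composable paths. -/
def GPath.comp (p q : GPath Q) (h : p.rng = q.start) : GPath Q :=
  ⟨p.start, p.edges ++ q.edges, pOk_append p.ok (by
    have hq := q.ok
    rw [← h] at hq
    exact hq)⟩

theorem GPath.comp_rng (p q : GPath Q) (h : p.rng = q.start) :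
    (p.comp q h).rng = q.rng := by
  show pRng Q p.start (p.edges ++ q.edges) = q.rng
  rw [pRng_append, show pRng Q p.start p.edges = q.start from h]
  rfl

theorem exists_sub {p q : GPath Q} (h1 : q.start = p.start)
    (h2 : p.edges <+: q.edges) :
    ∃ w : GPath Q, w.start = p.rng ∧ w.rng = q.rng ∧ p.edges ++ w.edges = q.edges := by
  obtain ⟨t, ht⟩ := h2
  have hok : pOk Q p.start (p.edges ++ t) := by rw [ht, ← h1]; exact q.ok
  refine ⟨⟨p.rng, t, pOk_drop hok⟩, rfl, ?_, ht⟩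
  show pRng Q (pRng Q p.start p.edges) t = pRng Q q.start q.edges
  rw [← pRng_append, ht, ← h1]

/-- If the path `q` decomposes as `p·w`, this is the path `w`. -/
noncomputable def subPath (p q : GPath Q) (h1 : q.start = p.start)
    (h2 : p.edges <+: q.edges) : GPath Q :=
  (exists_sub h1 h2).choose

theorem subPath_spec (p q : GPath Q) (h1 : q.start = p.start)
    (h2 : p.edges <+: q.edges) :
    (subPath p q h1 h2).start = p.rng ∧ (subPath p q h1 h2).rng = q.rng ∧
      p.edges ++ (subPath p q h1 h2).edges = q.edges :=
  (exists_sub h1 h2).choose_spec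

/-- The graph inverse semigroup `G(E)` over the graph `Q`: the element `0`
together with the elements `u v⁻¹` where `u, v` are paths with `r(u) = r(v)`. -/
inductive GIS (Q : DGraph) : Type
  | zero : GIS Q
  | elm (u v : GPath Q) (h : u.rng = v.rng) : GIS Q

instance : Zero (GIS Q) := ⟨GIS.zero⟩

-- Multiplication in the graph inverse semigroup:
-- `u₁v₁⁻¹ · u₂v₂⁻¹ = u₁wv₂⁻¹` if `u₂ = v₁w`, `u₁(v₂w)⁻¹` if `v₁ = u₂w`, `0` otherwise.
open Classical in
noncomputable def GIS.mul : GIS Q → GIS Q → GIS Q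
  | .zero, _ => .zero
  | _, .zero => .zero
  | .elm u₁ v₁ h₁, .elm u₂ v₂ h₂ =>
    if hA : u₂.start = v₁.start ∧ v₁.edges <+: u₂.edges then
      GIS.elm (u₁.comp (subPath v₁ u₂ hA.1 hA.2)
          (by rw [(subPath_spec v₁ u₂ hA.1 hA.2).1, h₁]))
        v₂
        (by rw [GPath.comp_rng, (subPath_spec v₁ u₂ hA.1 hA.2).2.1, h₂])
    else if hB : v₁.start = u₂.start ∧ u₂.edges <+: v₁.edges then
      GIS.elm u₁
        (v₂.comp (subPath u₂ v₁ hB.1 hB.2)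
          (by rw [(subPath_spec u₂ v₁ hB.1 hB.2).1, h₂]))
        (by rw [GPath.comp_rng, (subPath_spec u₂ v₁ hB.1 hB.2).2.1, h₁])
    else .zero

noncomputable instance : Mul (GIS Q) := ⟨GIS.mul⟩

/-- The inversion map of the graph inverse semigroup: `(uv⁻¹)⁻¹ = vu⁻¹`, `0⁻¹ = 0`. -/
def GIS.inv : GIS Q → GIS Q
  | .zero => .zero
  | .elm u v h => .elm v u h.symm

/-- The canonical identification of a path `u` with the element `u · r(u)⁻¹` of `G(E)`. -/
def toGIS (p : GPath Q) : GIS Q := GIS.elm p (GPath.triv Q p.rng) rfl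

end DGraph


namespace DGraph
variable {Q : DGraph}
/-- Green's relation `L`: `x L y` iff `S¹x = S¹y`. -/
def greenL (x y : GIS Q) : Prop :=
  insert x (Set.range fun s => s * x) = insert y (Set.range fun s => s * y)
/-- Green's relation `R`: `x R y` iff `xS¹ = yS¹`. -/
def greenR (x y : GIS Q) : Prop :=
  insert x (Set.range fun s => x * s) = insert y (Set.range fun s => y * s)
/-- Green's relation `D = L ∘ R`. -/
def greenD (x y : GIS Q) : Prop := ∃ z, greenL x z ∧ greenR z y
end DGraph

open DGraph

/-!
The principal left ideal of `ab⁻¹` is `{0} ∪ {p(bt)⁻¹}`: left multiplication can only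
extend the second path. Hence `ab⁻¹ L cd⁻¹ ↔ b = d`, and dually `ab⁻¹ R cd⁻¹ ↔ a = c`.
So `ab⁻¹ D cd⁻¹` forces `r(a) = r(b) = r(c)` through the middle element, and conversely
`cb⁻¹` is a middle element as soon as `r(a) = r(c)`. The vertex of the D-class of `ab⁻¹`
is `r(a)`.
-/

namespace DGraph

variable {Q : DGraph}

theorem GPath.ext {p q : GPath Q} (hs : p.start = q.start) (he : p.edges = q.edges) :
    p = q := by
  cases p; cases q; simp_all

def GPath.IsPrefix (p q : GPath Q) : Prop := q.start = p.start ∧ p.edges <+: q.edges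

theorem GPath.IsPrefix.refl (p : GPath Q) : p.IsPrefix p := ⟨rfl, List.prefix_refl _⟩

theorem GPath.IsPrefix.antisymm {p q : GPath Q} (hpq : p.IsPrefix q) (hqp : q.IsPrefix p) :
    p = q :=
  GPath.ext hqp.1 (hpq.2.sublist.antisymm hqp.2.sublist)

theorem GPath.isPrefix_comp (p w : GPath Q) (hw : p.rng = w.start) :
    p.IsPrefix (p.comp w hw) :=
  ⟨rfl, List.prefix_append _ _⟩

theorem GPath.IsPrefix.exists_comp {p q : GPath Q} (h : p.IsPrefix q) :
    ∃ w hw, q = p.comp w hw := by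
  obtain ⟨w, hws, -, hwe⟩ := exists_sub h.1 h.2
  exact ⟨w, hws.symm, GPath.ext h.1 hwe.symm⟩

theorem GPath.comp_eq_self {p w : GPath Q} (hw : p.rng = w.start) (he : w.edges = []) :
    p.comp w hw = p :=
  GPath.ext rfl (by simp [GPath.comp, he])

theorem subPath_comp (p w : GPath Q) (hw : p.rng = w.start) (h1 : (p.comp w hw).start = p.start)
    (h2 : p.edges <+: (p.comp w hw).edges) : subPath p (p.comp w hw) h1 h2 = w := by
  obtain ⟨hs, -, he⟩ := subPath_spec p (p.comp w hw) h1 h2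
  exact GPath.ext (hs.trans hw) (List.append_cancel_left he)

namespace GIS

theorem zero_mul (x : GIS Q) : (0 : GIS Q) * x = 0 := by
  cases x <;> rfl

theorem mul_zero (x : GIS Q) : x * (0 : GIS Q) = 0 := by
  cases x <;> rfl

theorem elm_ne_zero {u v : GPath Q} {h : u.rng = v.rng} : elm u v h ≠ 0 :=
  nofun

theorem elm_mul_elm_comp (u₁ v₁ w v₂ : GPath Q) (h₁ : u₁.rng = v₁.rng) (hw : v₁.rng = w.start)
    (h₂ : (v₁.comp w hw).rng = v₂.rng) :
    elm u₁ v₁ h₁ * elm (v₁.comp w hw) v₂ h₂ =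
      elm (u₁.comp w (h₁.trans hw)) v₂ (by rw [GPath.comp_rng, ← h₂, GPath.comp_rng]) := by
  show GIS.mul _ _ = _
  have hA := GPath.isPrefix_comp v₁ w hw
  simp only [GIS.mul, dif_pos (show _ ∧ _ from hA), subPath_comp]

theorem elm_comp_mul_elm (u₁ u₂ w v₂ : GPath Q) (hw : u₂.rng = w.start)
    (h₁ : u₁.rng = (u₂.comp w hw).rng) (h₂ : u₂.rng = v₂.rng) :
    elm u₁ (u₂.comp w hw) h₁ * elm u₂ v₂ h₂ =
      elm u₁ (v₂.comp w (h₂.symm.trans hw)) (by rw [h₁, GPath.comp_rng, GPath.comp_rng]) := by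
  show GIS.mul _ _ = _
  have hB := GPath.isPrefix_comp u₂ w hw
  simp only [GIS.mul, dif_pos (show _ ∧ _ from hB), subPath_comp]
  split_ifs with hA
  · -- both branches of the product apply: then `w` is trivial and they agree
    have hw₀ : w.edges = [] := by
      simpa [GPath.comp] using hA.2.length_le
    obtain ⟨-, -, hsub⟩ := subPath_spec _ _ hA.1 hA.2
    have hsub₀ : (subPath (u₂.comp w hw) u₂ hA.1 hA.2).edges = [] := by
      simpa [GPath.comp, hw₀] using hsub
    congr 1
    · exact GPath.comp_eq_self _ hsub₀
    · exact (GPath.comp_eq_self _ hw₀).symm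
  · rfl

theorem elm_mul_elm_eq_zero {u₁ v₁ u₂ v₂ : GPath Q} (h₁ : u₁.rng = v₁.rng)
    (h₂ : u₂.rng = v₂.rng) (hA : ¬v₁.IsPrefix u₂) (hB : ¬u₂.IsPrefix v₁) :
    elm u₁ v₁ h₁ * elm u₂ v₂ h₂ = 0 := by
  show GIS.mul _ _ = _
  simp only [GIS.mul, dif_neg (show ¬(_ ∧ _) from hA), dif_neg (show ¬(_ ∧ _) from hB)]
  rfl

theorem mul_elm_eq_zero_or (s : GIS Q) {a b : GPath Q} (h : a.rng = b.rng) :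
    s * elm a b h = 0 ∨ ∃ p q h', s * elm a b h = elm p q h' ∧ b.IsPrefix q := by
  rcases s with _ | ⟨u, v, huv⟩
  · exact Or.inl (zero_mul _)
  by_cases hA : v.IsPrefix a
  · obtain ⟨w, hw, rfl⟩ := hA.exists_comp
    exact Or.inr ⟨_, _, _, elm_mul_elm_comp .., .refl b⟩
  by_cases hB : a.IsPrefix v
  · obtain ⟨w, hw, rfl⟩ := hB.exists_comp
    exact Or.inr ⟨_, _, _, elm_comp_mul_elm .., GPath.isPrefix_comp ..⟩
  exact Or.inl (elm_mul_elm_eq_zero huv h hA hB)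

theorem elm_mul_eq_zero_or {a b : GPath Q} (h : a.rng = b.rng) (s : GIS Q) :
    elm a b h * s = 0 ∨ ∃ p q h', elm a b h * s = elm p q h' ∧ a.IsPrefix p := by
  rcases s with _ | ⟨u, v, huv⟩
  · exact Or.inl (mul_zero _)
  by_cases hA : b.IsPrefix u
  · obtain ⟨w, hw, rfl⟩ := hA.exists_comp
    exact Or.inr ⟨_, _, _, elm_mul_elm_comp .., GPath.isPrefix_comp ..⟩
  by_cases hB : u.IsPrefix b
  · obtain ⟨w, hw, rfl⟩ := hB.exists_comp
    exact Or.inr ⟨_, _, _, elm_comp_mul_elm .., .refl a⟩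
  exact Or.inl (elm_mul_elm_eq_zero h huv hA hB)

end GIS

def leftIdeal (x : GIS Q) : Set (GIS Q) := insert x (Set.range fun s => s * x)

def rightIdeal (x : GIS Q) : Set (GIS Q) := insert x (Set.range fun s => x * s)

theorem greenL_iff {x y : GIS Q} : greenL x y ↔ leftIdeal x = leftIdeal y := Iff.rfl

theorem greenR_iff {x y : GIS Q} : greenR x y ↔ rightIdeal x = rightIdeal y := Iff.rfl

theorem mem_leftIdeal_elm {a b : GPath Q} (h : a.rng = b.rng) {y : GIS Q} :
    y ∈ leftIdeal (GIS.elm a b h) ↔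
      y = 0 ∨ ∃ p q h', y = GIS.elm p q h' ∧ b.IsPrefix q := by
  constructor
  · rintro (rfl | ⟨s, rfl⟩)
    · exact Or.inr ⟨a, b, h, rfl, .refl b⟩
    · exact GIS.mul_elm_eq_zero_or s h
  · rintro (rfl | ⟨p, q, hpq, rfl, hbq⟩)
    · exact Or.inr ⟨0, GIS.zero_mul _⟩
    obtain ⟨w, hw, rfl⟩ := hbq.exists_comp
    have hp : p.rng = (a.comp w (h.trans hw)).rng := by
      rw [hpq, GPath.comp_rng, GPath.comp_rng]
    exact Or.inr ⟨GIS.elm p (a.comp w (h.trans hw)) hp, GIS.elm_comp_mul_elm ..⟩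

theorem mem_rightIdeal_elm {a b : GPath Q} (h : a.rng = b.rng) {y : GIS Q} :
    y ∈ rightIdeal (GIS.elm a b h) ↔
      y = 0 ∨ ∃ p q h', y = GIS.elm p q h' ∧ a.IsPrefix p := by
  constructor
  · rintro (rfl | ⟨s, rfl⟩)
    · exact Or.inr ⟨a, b, h, rfl, .refl a⟩
    · exact GIS.elm_mul_eq_zero_or h s
  · rintro (rfl | ⟨p, q, hpq, rfl, hap⟩)
    · exact Or.inr ⟨0, GIS.mul_zero _⟩
    obtain ⟨w, hw, rfl⟩ := hap.exists_comp
    have hq : (b.comp w (h.symm.trans hw)).rng = q.rng := by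
      rw [← hpq, GPath.comp_rng, GPath.comp_rng]
    exact Or.inr ⟨GIS.elm (b.comp w (h.symm.trans hw)) q hq, GIS.elm_mul_elm_comp ..⟩

theorem self_mem_leftIdeal (x : GIS Q) : x ∈ leftIdeal x := Set.mem_insert _ _

theorem self_mem_rightIdeal (x : GIS Q) : x ∈ rightIdeal x := Set.mem_insert _ _

theorem leftIdeal_zero : leftIdeal (0 : GIS Q) = {0} := by
  simp [leftIdeal, GIS.mul_zero]

theorem isPrefix_of_elm_mem_leftIdeal {a b p q : GPath Q} {h : a.rng = b.rng}
    {h' : p.rng = q.rng} (hmem : GIS.elm p q h' ∈ leftIdeal (GIS.elm a b h)) : b.IsPrefix q := by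
  obtain h0 | ⟨_, _, _, he, hbq⟩ := (mem_leftIdeal_elm h).1 hmem
  · exact (GIS.elm_ne_zero h0).elim
  · obtain ⟨-, rfl⟩ := GIS.elm.inj he
    exact hbq

theorem isPrefix_of_elm_mem_rightIdeal {a b p q : GPath Q} {h : a.rng = b.rng}
    {h' : p.rng = q.rng} (hmem : GIS.elm p q h' ∈ rightIdeal (GIS.elm a b h)) : a.IsPrefix p := by
  obtain h0 | ⟨_, _, _, he, hap⟩ := (mem_rightIdeal_elm h).1 hmem
  · exact (GIS.elm_ne_zero h0).elim
  · obtain ⟨rfl, -⟩ := GIS.elm.inj he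
    exact hap

theorem greenL_elm_iff {a b c d : GPath Q} (hab : a.rng = b.rng) (hcd : c.rng = d.rng) :
    greenL (GIS.elm a b hab) (GIS.elm c d hcd) ↔ b = d := by
  rw [greenL_iff]
  constructor
  · intro hL
    have hbd := isPrefix_of_elm_mem_leftIdeal (hL ▸ self_mem_leftIdeal (GIS.elm c d hcd))
    have hdb := isPrefix_of_elm_mem_leftIdeal (hL ▸ self_mem_leftIdeal (GIS.elm a b hab))
    exact hbd.antisymm hdb
  · rintro rfl
    ext y
    simp only [mem_leftIdeal_elm]

theorem greenR_elm_iff {a b c d : GPath Q} (hab : a.rng = b.rng) (hcd : c.rng = d.rng) :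
    greenR (GIS.elm a b hab) (GIS.elm c d hcd) ↔ a = c := by
  rw [greenR_iff]
  constructor
  · intro hR
    have hac := isPrefix_of_elm_mem_rightIdeal (hR ▸ self_mem_rightIdeal (GIS.elm c d hcd))
    have hca := isPrefix_of_elm_mem_rightIdeal (hR ▸ self_mem_rightIdeal (GIS.elm a b hab))
    exact hac.antisymm hca
  · rintro rfl
    ext y
    simp only [mem_rightIdeal_elm]

theorem greenD_elm_iff {a b c d : GPath Q} (hab : a.rng = b.rng) (hcd : c.rng = d.rng) :
    greenD (GIS.elm a b hab) (GIS.elm c d hcd) ↔ a.rng = c.rng := by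
  constructor
  · rintro ⟨_ | ⟨p, q, hpq⟩, hL, hR⟩
    · have hmem : GIS.elm a b hab ∈ leftIdeal (0 : GIS Q) :=
        greenL_iff.1 hL ▸ self_mem_leftIdeal _
      rw [leftIdeal_zero] at hmem
      exact (GIS.elm_ne_zero hmem).elim
    · obtain rfl := (greenL_elm_iff hab hpq).1 hL
      obtain rfl := (greenR_elm_iff hpq hcd).1 hR
      exact hab.trans hpq.symm
  · intro hac
    have hcb : c.rng = b.rng := hac.symm.trans hab
    exact ⟨GIS.elm c b hcb, (greenL_elm_iff hab hcb).2 rfl, (greenR_elm_iff hcb hcd).2 rfl⟩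

end DGraph

theorem stmt12 (Q : DGraph) :
    (∀ (a b c d : GPath Q) (hab : a.rng = b.rng) (hcd : c.rng = d.rng),
      greenD (GIS.elm a b hab) (GIS.elm c d hcd) ↔ a.rng = c.rng) ∧
    (∀ x : GIS Q, x ≠ 0 → ∃! v : Q.V, greenD x (toGIS (GPath.triv Q v))) := by
  refine ⟨fun a b c d hab hcd => greenD_elm_iff hab hcd, ?_⟩
  rintro (_ | ⟨a, b, h⟩) hx
  · exact absurd rfl hx
  · exact ⟨a.rng, (greenD_elm_iff h rfl).2 rfl, fun v hv => ((greenD_elm_iff h rfl).1 hv).symm⟩
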